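/- arXiv:1508.01504 — 4 statements merged into one kernel-verified Lean document; each statement's English description precedes it below -/
import Mathlib

section
/- The recurrence T(r, n) ≤ a·log n + 2·T(√r, r^{c/2}) with n ≤ r^c, and T = O(1) at the base case, has solution T(r, n) = O(log n · log log r). In particular, for r = n, the parallel time of SPMS is O(log n · log log n). -/
set_option maxRecDepth 2000

private def dep (r₀ r : ℕ) : ℕ :=
  if h : r ≤ 2 ∨ r ≤ r₀ then 0
  else dep r₀ (Nat.sqrt r + 1) + 1
termination_by r
decreasing_by
  push_neg at h
  obtain ⟨t, rfl⟩ : ∃ t, r = t + 3 := ⟨r - 3, by omega⟩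
  have : Nat.sqrt (t + 3) < t + 2 := Nat.sqrt_lt.mpr (by nlinarith)
  omega

private lemma dep_zero {r₀ r : ℕ} (h : r ≤ 2 ∨ r ≤ r₀) : dep r₀ r = 0 := by
  rw [dep]; simp [h]

private lemma dep_succ {r₀ r : ℕ} (h : ¬(r ≤ 2 ∨ r ≤ r₀)) :
    dep r₀ r = dep r₀ (Nat.sqrt r + 1) + 1 := by
  rw [dep]; simp [h]

private lemma dep_step_le {r₀ r k : ℕ} (h : dep r₀ (Nat.sqrt r + 1) ≤ k) :
    dep r₀ r ≤ k + 1 := by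
  by_cases hg : r ≤ 2 ∨ r ≤ r₀
  · rw [dep_zero hg]; omega
  · rw [dep_succ hg]; omega

private lemma sqrt1_le {r b : ℕ} (h : r < b * b) : Nat.sqrt r + 1 ≤ b := by
  have := Nat.sqrt_lt.mpr h; omega

private lemma dep_le_1 {r₀ r : ℕ} (h : r ≤ 3) : dep r₀ r ≤ 1 :=
  dep_step_le (by rw [dep_zero (Or.inl (sqrt1_le (by omega)))])

private lemma dep_le_2 {r₀ r : ℕ} (h : r ≤ 8) : dep r₀ r ≤ 2 :=
  dep_step_le (dep_le_1 (by have := sqrt1_le (show r < 3 * 3 by omega); omega))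

private lemma dep_le_3 {r₀ r : ℕ} (h : r ≤ 63) : dep r₀ r ≤ 3 :=
  dep_step_le (dep_le_2 (by have := sqrt1_le (show r < 8 * 8 by omega); omega))

private lemma dep_le_4 {r₀ r : ℕ} (h : r ≤ 3968) : dep r₀ r ≤ 4 :=
  dep_step_le (dep_le_3 (by have := sqrt1_le (show r < 63 * 63 by omega); omega))

private lemma dep_le_5 {r₀ r : ℕ} (h : r ≤ 15745023) : dep r₀ r ≤ 5 :=
  dep_step_le (dep_le_4 (by have := sqrt1_le (show r < 3968 * 3968 by omega); omega))

private lemma log3_ge1 : (1:ℝ) ≤ Real.log 3 := by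
  rw [Real.le_log_iff_exp_le (by norm_num)]
  have := Real.exp_one_lt_d9
  linarith

private lemma log3_le : Real.log 3 ≤ 2 * Real.log 2 := by
  have h : Real.log 3 ≤ Real.log 4 := Real.log_le_log (by norm_num) (by norm_num)
  have h4 : Real.log 4 = 2 * Real.log 2 := by
    rw [show (4:ℝ) = 2 ^ 2 by norm_num, Real.log_pow]; norm_num
  linarith

/-- log(√r + 1) ≤ (log r)/2 + log 2. -/
private lemma log_sqrt_succ {r : ℕ} (h2 : 2 ≤ r) :
    Real.log ((Nat.sqrt r + 1 : ℕ) : ℝ) ≤ Real.log r / 2 + Real.log 2 := by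
  have hq : Nat.sqrt r * Nat.sqrt r ≤ r := Nat.sqrt_le r
  have hq2 : Nat.sqrt r ≤ r := Nat.sqrt_le_self r
  have hnat : (Nat.sqrt r + 1) * (Nat.sqrt r + 1) ≤ 4 * r := by nlinarith
  have hcast : ((Nat.sqrt r + 1 : ℕ) : ℝ) * ((Nat.sqrt r + 1 : ℕ) : ℝ) ≤ 4 * (r : ℝ) := by
    exact_mod_cast hnat
  have hspos : (0:ℝ) < ((Nat.sqrt r + 1 : ℕ) : ℝ) := by positivity
  have hrpos : (0:ℝ) < (r : ℝ) := by exact_mod_cast (by omega : 0 < r)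
  have h4r : Real.log (((Nat.sqrt r + 1 : ℕ) : ℝ) * ((Nat.sqrt r + 1 : ℕ) : ℝ))
      ≤ Real.log (4 * (r : ℝ)) := Real.log_le_log (by positivity) hcast
  rw [Real.log_mul (ne_of_gt hspos) (ne_of_gt hspos),
      Real.log_mul (by norm_num) (ne_of_gt hrpos)] at h4r
  have h4 : Real.log 4 = 2 * Real.log 2 := by
    rw [show (4:ℝ) = 2 ^ 2 by norm_num, Real.log_pow]; norm_num
  linarith

private lemma pow_dep_le_aux (r₀ : ℕ) (hr₀ : 2 ≤ r₀) :
    ∀ r : ℕ, 256 ≤ r → (2:ℝ) ^ (dep r₀ r) ≤ 20 * (Real.log r - 2 * Real.log 2) - 32 := by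
  intro r
  induction r using Nat.strong_induction_on with
  | _ r ih =>
    intro h256
    have hlog2 : (0.6931471803:ℝ) < Real.log 2 := Real.log_two_gt_d9
    have hlr : 8 * Real.log 2 ≤ Real.log r := by
      have h1 : ((2:ℝ) ^ 8) ≤ (r : ℝ) := by
        norm_num
        exact_mod_cast h256
      have := Real.log_le_log (by positivity) h1
      rwa [Real.log_pow] at this
    by_cases hg : r ≤ 2 ∨ r ≤ r₀
    · rw [dep_zero hg]; norm_num; linarith
    · by_cases hsmall : r ≤ 15745023
      · have hd : dep r₀ r ≤ 5 := dep_le_5 hsmall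
        have hp : (2:ℝ) ^ (dep r₀ r) ≤ 2 ^ 5 :=
          pow_le_pow_right₀ (by norm_num) hd
        norm_num at hp
        linarith
      · push_neg at hg hsmall
        have hs256 : 256 ≤ Nat.sqrt r + 1 := by
          have : 255 ≤ Nat.sqrt r := Nat.le_sqrt.mpr (by omega)
          omega
        have hslt : Nat.sqrt r + 1 < r := by
          have h1 : Nat.sqrt r * Nat.sqrt r ≤ r := Nat.sqrt_le r
          have h2 : 255 ≤ Nat.sqrt r := Nat.le_sqrt.mpr (by omega)
          nlinarith
        have hIH := ih _ hslt hs256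
        have hls : Real.log ((Nat.sqrt r + 1 : ℕ) : ℝ) ≤ Real.log r / 2 + Real.log 2 :=
          log_sqrt_succ (by omega)
        rw [dep_succ (by omega), pow_succ]
        linarith

private lemma pow_dep_le (r₀ : ℕ) (hr₀ : 2 ≤ r₀) {r : ℕ} (h2 : 2 ≤ r) :
    (2:ℝ) ^ (dep r₀ r) ≤ 40 * Real.log r := by
  have hlog2 : (0.6931471803:ℝ) < Real.log 2 := Real.log_two_gt_d9
  have hlr2 : Real.log 2 ≤ Real.log r :=
    Real.log_le_log (by norm_num) (by exact_mod_cast h2)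
  by_cases h256 : 256 ≤ r
  · have := pow_dep_le_aux r₀ hr₀ r h256
    linarith
  · have hd : dep r₀ r ≤ 4 := dep_le_4 (by omega)
    have hp : (2:ℝ) ^ (dep r₀ r) ≤ 2 ^ 4 := pow_le_pow_right₀ (by norm_num) hd
    norm_num at hp
    linarith

private lemma dep_le_loglog (r₀ : ℕ) (hr₀ : 2 ≤ r₀) {r : ℕ} (h2 : 2 ≤ r) :
    ((dep r₀ r : ℕ) : ℝ) + 1 ≤ 7 * (Real.log (Real.log r) + 1) := by
  have hlog2 : (0.6931471803:ℝ) < Real.log 2 := Real.log_two_gt_d9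
  have hlog2' : Real.log 2 < 0.6931471808 := Real.log_two_lt_d9
  by_cases h3 : 3 ≤ r
  · have hlr1 : (1:ℝ) ≤ Real.log r := by
      rw [Real.le_log_iff_exp_le (by exact_mod_cast (by omega : 0 < r))]
      have := Real.exp_one_lt_d9
      have h3' : (3:ℝ) ≤ (r:ℝ) := by exact_mod_cast h3
      linarith
    have hllr : (0:ℝ) ≤ Real.log (Real.log r) := Real.log_nonneg hlr1
    have hpd : (2:ℝ) ^ (dep r₀ r) ≤ 40 * Real.log r := pow_dep_le r₀ hr₀ h2
    have hlog_pd : Real.log ((2:ℝ) ^ (dep r₀ r)) ≤ Real.log (40 * Real.log r) :=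
      Real.log_le_log (by positivity) hpd
    rw [Real.log_pow, Real.log_mul (by norm_num) (by linarith)] at hlog_pd
    have h40 : Real.log 40 ≤ 6 * Real.log 2 := by
      have h : Real.log 40 ≤ Real.log 64 := Real.log_le_log (by norm_num) (by norm_num)
      have h64 : Real.log 64 = 6 * Real.log 2 := by
        rw [show (64:ℝ) = 2 ^ 6 by norm_num, Real.log_pow]; norm_num
      linarith
    have hprod : (0:ℝ) ≤ Real.log (Real.log r) * (7 * Real.log 2 - 1) :=
      mul_nonneg hllr (by linarith)
    have key2 : (((dep r₀ r : ℕ) : ℝ) + 1) * Real.log 2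
        ≤ (7 * (Real.log (Real.log r) + 1)) * Real.log 2 := by
      nlinarith [hlog_pd, h40, hprod]
    exact le_of_mul_le_mul_right key2 (by linarith)
  · have : r = 2 := by omega
    subst this
    rw [dep_zero (Or.inl le_rfl)]
    have h12 : Real.log (1/2 : ℝ) ≤ Real.log (Real.log 2) :=
      Real.log_le_log (by norm_num) (by linarith)
    rw [show (1/2:ℝ) = 2⁻¹ by norm_num, Real.log_inv] at h12
    push_cast
    linarith

private lemma loglog_ge (r : ℕ) (h2 : 2 ≤ r) :
    (1/4 : ℝ) ≤ Real.log (Real.log r) + 1 := by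
  have hlog2 : (0.6931471803:ℝ) < Real.log 2 := Real.log_two_gt_d9
  have hlog2' : Real.log 2 < 0.6931471808 := Real.log_two_lt_d9
  have hlr2 : Real.log 2 ≤ Real.log r :=
    Real.log_le_log (by norm_num) (by exact_mod_cast h2)
  have h12 : Real.log (1/2 : ℝ) ≤ Real.log (Real.log r) :=
    Real.log_le_log (by norm_num) (by linarith)
  rw [show (1/2:ℝ) = 2⁻¹ by norm_num, Real.log_inv] at h12
  linarith

private lemma main_aux (T : ℕ → ℕ → ℝ) (a : ℝ) (c r₀ : ℕ)
    (ha : 0 < a) (hc : 6 ≤ c) (hr₀ : 2 ≤ r₀)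
    (hbase : ∀ r n : ℕ, r ≤ r₀ → T r n ≤ a)
    (hrec : ∀ r n : ℕ, r₀ < r → n ≤ 3 * r ^ c →
      T r n ≤ a * Real.log n + 2 * T (Nat.sqrt r + 1) (3 * r ^ (c / 2))) :
    ∀ r : ℕ, ∀ n : ℕ, 2 ≤ r → n ≤ 3 * r ^ c →
      T r n ≤ a * (((dep r₀ r : ℕ) + 1) * (Real.log 3 + c * Real.log r)
        + (Real.log 3 / 2 + c * Real.log 2)
          * (4 * 2 ^ (dep r₀ r) - 2 * ((dep r₀ r : ℕ) : ℝ) - 4)) := by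
  intro r
  induction r using Nat.strong_induction_on with
  | _ r ih =>
    intro n h2 hn
    have hlrpos : (0:ℝ) ≤ Real.log r :=
      Real.log_nonneg (by exact_mod_cast (by omega : 1 ≤ r))
    have hcpos : (0:ℝ) ≤ (c:ℝ) := by positivity
    have hL1 : (1:ℝ) ≤ Real.log 3 + c * Real.log r := by
      nlinarith [log3_ge1]
    by_cases hb : r ≤ r₀
    · rw [dep_zero (Or.inr hb)]
      have hT := hbase r n hb
      have haL : a * 1 ≤ a * (Real.log 3 + c * Real.log r) :=
        mul_le_mul_of_nonneg_left hL1 ha.le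
      push_cast
      norm_num
      linarith
    · push_neg at hb
      have h3 : 3 ≤ r := by omega
      have hslt : Nat.sqrt r + 1 < r := by
        obtain ⟨t, rfl⟩ : ∃ t, r = t + 3 := ⟨r - 3, by omega⟩
        have : Nat.sqrt (t + 3) < t + 2 := Nat.sqrt_lt.mpr (by nlinarith)
        omega
      have hs2 : 2 ≤ Nat.sqrt r + 1 := by
        have : 1 ≤ Nat.sqrt r := Nat.le_sqrt.mpr (by omega)
        omega
      have hm : 3 * r ^ (c / 2) ≤ 3 * (Nat.sqrt r + 1) ^ c := by
        have h1 : r ≤ (Nat.sqrt r + 1) * (Nat.sqrt r + 1) := le_of_lt (Nat.lt_succ_sqrt r)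
        have h2' : r ^ (c / 2) ≤ ((Nat.sqrt r + 1) * (Nat.sqrt r + 1)) ^ (c / 2) :=
          Nat.pow_le_pow_left h1 _
        have h3' : ((Nat.sqrt r + 1) * (Nat.sqrt r + 1)) ^ (c / 2)
            = (Nat.sqrt r + 1) ^ (2 * (c / 2)) := by
          rw [show (Nat.sqrt r + 1) * (Nat.sqrt r + 1) = (Nat.sqrt r + 1) ^ 2 by ring, ← pow_mul]
        have h4' : (Nat.sqrt r + 1) ^ (2 * (c / 2)) ≤ (Nat.sqrt r + 1) ^ c :=
          Nat.pow_le_pow_right (by omega) (by omega)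
        omega
      have hT := hrec r n hb hn
      have hIH := ih (Nat.sqrt r + 1) hslt (3 * r ^ (c / 2)) hs2 hm
      have hlogn : Real.log n ≤ Real.log 3 + c * Real.log r := by
        rcases Nat.eq_zero_or_pos n with h0 | h0
        · subst h0; simp [Real.log_zero]; nlinarith [log3_ge1]
        · have hcast : (n:ℝ) ≤ 3 * (r:ℝ) ^ c := by exact_mod_cast hn
          have hrpos : (0:ℝ) < (r:ℝ) := by exact_mod_cast (by omega : 0 < r)
          have := Real.log_le_log (by exact_mod_cast h0) hcast
          rwa [Real.log_mul (by norm_num) (by positivity), Real.log_pow] at this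
      have hls : Real.log ((Nat.sqrt r + 1 : ℕ) : ℝ) ≤ Real.log r / 2 + Real.log 2 :=
        log_sqrt_succ (by omega)
      push_cast at hls hIH
      have hLs : Real.log 3 + c * Real.log ((Nat.sqrt r : ℝ) + 1) ≤
          (Real.log 3 + c * Real.log r) / 2 + (Real.log 3 / 2 + c * Real.log 2) := by
        nlinarith [mul_le_mul_of_nonneg_left hls hcpos]
      have hprod : (0:ℝ) ≤ a * ((((dep r₀ (Nat.sqrt r + 1) : ℕ) : ℝ) + 1) *
          ((Real.log 3 + c * Real.log r) / 2 + (Real.log 3 / 2 + c * Real.log 2)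
            - (Real.log 3 + c * Real.log ((Nat.sqrt r : ℝ) + 1)))) := by
        apply mul_nonneg ha.le
        apply mul_nonneg (by positivity)
        linarith
      have halogn : a * Real.log n ≤ a * (Real.log 3 + c * Real.log r) :=
        mul_le_mul_of_nonneg_left hlogn ha.le
      rw [dep_succ (by omega)]
      push_cast [pow_succ]
      nlinarith [hT, hIH, hprod, halogn]

/-- The span recurrence `T(r,n) ≤ a·log n + 2·T(√r, 3·r^(c/2))` with
`n ≤ 3·r^c` and constant base case has solution `T(r,n) = O(log n · log log r)`;
for `r = n` this gives `O(log n · log log n)` parallel time. -/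
theorem span_recurrence (T : ℕ → ℕ → ℝ) (a : ℝ) (c r₀ : ℕ)
    (ha : 0 < a) (hc : 6 ≤ c) (hr₀ : 2 ≤ r₀)
    (hbase : ∀ r n : ℕ, r ≤ r₀ → T r n ≤ a)
    (hrec : ∀ r n : ℕ, r₀ < r → n ≤ 3 * r ^ c →
      T r n ≤ a * Real.log n + 2 * T (Nat.sqrt r + 1) (3 * r ^ (c / 2))) :
    ∃ C : ℝ, ∀ r n : ℕ, 2 ≤ r → r ≤ n → n ≤ 3 * r ^ c →
      T r n ≤ C * Real.log n * (Real.log (Real.log r) + 1) := by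
  refine ⟨1000 * a * ((c:ℝ) + 2), ?_⟩
  intro r n h2 hrn hn
  have key := main_aux T a c r₀ ha hc hr₀ hbase hrec r n h2 hn
  have hlog2 : (0.6931471803:ℝ) < Real.log 2 := Real.log_two_gt_d9
  have hlog2' : Real.log 2 < 0.6931471808 := Real.log_two_lt_d9
  have hcpos : (0:ℝ) ≤ (c:ℝ) := by positivity
  have hlr0 : (0:ℝ) ≤ Real.log r :=
    Real.log_nonneg (by exact_mod_cast (by omega : 1 ≤ r))
  have hlrn : Real.log r ≤ Real.log n :=
    Real.log_le_log (by exact_mod_cast (by omega : 0 < r)) (by exact_mod_cast hrn)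
  have hln2 : Real.log 2 ≤ Real.log n :=
    Real.log_le_log (by norm_num) (by exact_mod_cast (by omega : 2 ≤ n))
  have hln0 : (0:ℝ) ≤ Real.log n := by linarith
  have hd1 : ((dep r₀ r : ℕ) : ℝ) + 1 ≤ 7 * (Real.log (Real.log r) + 1) :=
    dep_le_loglog r₀ hr₀ h2
  have h2d : (2:ℝ) ^ (dep r₀ r) ≤ 40 * Real.log r := pow_dep_le r₀ hr₀ h2
  have hll4 : (1/4 : ℝ) ≤ Real.log (Real.log r) + 1 := loglog_ge r h2
  have hll0 : (0:ℝ) ≤ Real.log (Real.log r) + 1 := by linarith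
  have hclr : (c:ℝ) * Real.log r ≤ (c:ℝ) * Real.log n :=
    mul_le_mul_of_nonneg_left hlrn hcpos
  have hL : Real.log 3 + c * Real.log r ≤ ((c:ℝ) + 2) * Real.log n := by
    have := log3_le
    linarith
  have hL0 : (0:ℝ) ≤ Real.log 3 + c * Real.log r := by
    linarith [log3_ge1, mul_nonneg hcpos hlr0]
  have hcl2 : (c:ℝ) * Real.log 2 ≤ (c:ℝ) * 0.6931471808 :=
    mul_le_mul_of_nonneg_left hlog2'.le hcpos
  have hE : Real.log 3 / 2 + c * Real.log 2 ≤ (c:ℝ) + 1 := by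
    have := log3_le
    linarith
  have hE0 : (0:ℝ) ≤ Real.log 3 / 2 + c * Real.log 2 := by
    linarith [log3_ge1, mul_nonneg hcpos (le_of_lt (lt_trans (by norm_num) hlog2))]
  have hd0 : (0:ℝ) ≤ ((dep r₀ r : ℕ) : ℝ) := by positivity
  have h2d0 : (0:ℝ) ≤ (2:ℝ) ^ (dep r₀ r) := by positivity
  set X := Real.log n * (Real.log (Real.log r) + 1) with hX
  have hX0 : (0:ℝ) ≤ X := mul_nonneg hln0 hll0
  -- Term 1
  have t1 : (((dep r₀ r : ℕ) : ℝ) + 1) * (Real.log 3 + c * Real.log r)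
      ≤ 7 * ((c:ℝ) + 2) * X := by
    calc (((dep r₀ r : ℕ) : ℝ) + 1) * (Real.log 3 + c * Real.log r)
        ≤ (7 * (Real.log (Real.log r) + 1)) * (((c:ℝ) + 2) * Real.log n) :=
          mul_le_mul hd1 hL hL0 (by linarith)
      _ = 7 * ((c:ℝ) + 2) * X := by rw [hX]; ring
  -- Term 2
  have t2 : (Real.log 3 / 2 + c * Real.log 2) * (2:ℝ) ^ (dep r₀ r)
      ≤ ((c:ℝ) + 1) * (40 * Real.log n) :=
    mul_le_mul hE (by linarith) h2d0 (by linarith)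
  -- log n ≤ 4 X
  have t3 : Real.log n ≤ 4 * X := by
    have := mul_le_mul_of_nonneg_left hll4 (show (0:ℝ) ≤ 4 * Real.log n by linarith)
    rw [hX]; linarith
  have t2' : 4 * ((Real.log 3 / 2 + c * Real.log 2) * (2:ℝ) ^ (dep r₀ r))
      ≤ 640 * ((c:ℝ) + 1) * X := by
    have h40 : ((c:ℝ) + 1) * (40 * Real.log n) ≤ ((c:ℝ) + 1) * (40 * (4 * X)) := by
      apply mul_le_mul_of_nonneg_left _ (by positivity)
      linarith
    linarith [t2, h40]
  -- drop negative part
  have hdrop : a * (((dep r₀ r : ℕ) + 1) * (Real.log 3 + c * Real.log r)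
        + (Real.log 3 / 2 + c * Real.log 2)
          * (4 * 2 ^ (dep r₀ r) - 2 * ((dep r₀ r : ℕ) : ℝ) - 4))
      ≤ a * ((((dep r₀ r : ℕ) : ℝ) + 1) * (Real.log 3 + c * Real.log r)
        + 4 * ((Real.log 3 / 2 + c * Real.log 2) * (2:ℝ) ^ (dep r₀ r))) := by
    apply mul_le_mul_of_nonneg_left _ ha.le
    linarith [mul_nonneg hE0 hd0, hE0]
  have hsum : (((dep r₀ r : ℕ) : ℝ) + 1) * (Real.log 3 + c * Real.log r)
        + 4 * ((Real.log 3 / 2 + c * Real.log 2) * (2:ℝ) ^ (dep r₀ r))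
      ≤ 7 * ((c:ℝ) + 2) * X + 640 * ((c:ℝ) + 1) * X := by
    linarith [t1, t2']
  have hmul := mul_le_mul_of_nonneg_left hsum ha.le
  have hfinal : a * (7 * ((c:ℝ) + 2) * X + 640 * ((c:ℝ) + 1) * X)
      ≤ 1000 * a * ((c:ℝ) + 2) * X := by
    linarith [mul_nonneg (mul_nonneg ha.le hX0) hcpos, mul_nonneg ha.le hX0]
  calc T r n ≤ _ := key
    _ ≤ _ := hdrop
    _ ≤ a * (7 * ((c:ℝ) + 2) * X + 640 * ((c:ℝ) + 1) * X) := hmul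
    _ ≤ 1000 * a * ((c:ℝ) + 2) * X := hfinal
    _ = 1000 * a * ((c:ℝ) + 2) * Real.log n * (Real.log (Real.log r) + 1) := by
        rw [hX]; ring
end

section
/- The divide-and-conquer cache-miss recurrence Q(n) ≤ a·n/B + 2·Q'(n), where each level of recursion splits into subproblems whose sizes square-root (subproblems of size at most 3·n^{1/2+ε} after each double round), with base case Q(n) = O(n/B) for n ≤ M, has solution Q(n) = O((n/B)·(log n / log M)). -/
set_option maxHeartbeats 1000000

/-- The divide-and-conquer cache-miss recurrence
`Q(n) ≤ a·n/B + Σ_k Q(m_k)` with `Σ_k m_k ≤ 2n` and each `m_k ≤ 3·√n`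
(subproblem sizes square-root at each double round), with base case
`Q(n) ≤ a·n/B` for `n ≤ M`, has solution `Q(n) = O((n/B)·(log n / log M))`. -/
theorem cache_miss_recurrence (Q : ℕ → ℝ) (a B M : ℝ)
    (ha : 0 < a) (hB : 4 ≤ B) (hM : B ^ 2 ≤ M)
    (hbase : ∀ n : ℕ, (n : ℝ) ≤ M → Q n ≤ a * n / B)
    (hrec : ∀ n : ℕ, M < (n : ℝ) →
      ∃ (s : Finset ℕ) (m : ℕ → ℕ),
        (∀ k ∈ s, (m k : ℝ) ≤ 3 * Real.sqrt n) ∧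
        ((∑ k ∈ s, m k : ℕ) : ℝ) ≤ 2 * n ∧
        Q n ≤ a * n / B + ∑ k ∈ s, Q (m k)) :
    ∃ C : ℝ, ∀ n : ℕ, 2 ≤ n →
      Q n ≤ C * ((n : ℝ) / B) * (Real.log n / Real.log M) := by
  have hB0 : (0:ℝ) < B := by linarith
  have hM16 : (16:ℝ) ≤ M := by nlinarith
  have hlogM : 0 < Real.log M := Real.log_pos (by linarith)
  set δ : ℝ := Real.log (10/9) with hδdef
  have hδ : 0 < δ := Real.log_pos (by norm_num)
  set C : ℝ := 2 * a / δ with hCdef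
  have hC : 0 < C := by positivity
  have hCδ : C * δ = 2 * a := by
    rw [hCdef]; field_simp
  -- the potential function
  set h : ℝ → ℝ := fun x => max 0 (Real.log x - Real.log 10) with hhdef
  have hh0 : ∀ x, 0 ≤ h x := fun x => le_max_left _ _
  -- main claim by strong induction
  have main : ∀ n : ℕ, Q n ≤ ((n:ℝ) / B) * (C * h (n:ℝ) + a) := by
    intro n
    induction n using Nat.strong_induction_on with
    | _ n ih =>
      by_cases hn : (n:ℝ) ≤ M
      · have hb := hbase n hn
        have h1 : 0 ≤ ((n:ℝ)/B) * (C * h (n:ℝ)) := by positivity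
        have : a * n / B = ((n:ℝ)/B) * a := by ring
        nlinarith
      · push_neg at hn
        obtain ⟨s, m, hm1, hm2, hm3⟩ := hrec n hn
        have h16 : (16:ℝ) < n := lt_of_le_of_lt hM16 hn
        have h16' : 16 < n := by exact_mod_cast h16
        have h17 : (17:ℝ) ≤ n := by exact_mod_cast h16'
        have hn0 : (0:ℝ) < n := by linarith
        set S : ℝ := Real.sqrt n with hSdef
        have hS0 : 0 < S := Real.sqrt_pos.2 hn0
        have hS3 : 3 < S := by
          rw [hSdef]
          rw [show (3:ℝ) = Real.sqrt 9 by
            rw [show (9:ℝ) = 3^2 by norm_num, Real.sqrt_sq (by norm_num)]]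
          exact Real.sqrt_lt_sqrt (by norm_num) (by linarith)
        have hSS : S * S = n := Real.mul_self_sqrt hn0.le
        have h3Sn : 3 * S < n := by nlinarith
        set H : ℝ := max 0 (Real.log (3*S) - Real.log 10) with hHdef
        have hH0 : 0 ≤ H := le_max_left _ _
        -- each subproblem bound
        have hsub : ∀ k ∈ s, Q (m k) ≤ ((m k : ℝ)/B) * (C * H + a) := by
          intro k hk
          have hmk := hm1 k hk
          have hlt : m k < n := by
            have : (m k : ℝ) < n := lt_of_le_of_lt hmk h3Sn
            exact_mod_cast this
          refine (ih (m k) hlt).trans ?_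
          have hmono : h ((m k : ℝ)) ≤ H := by
            rcases Nat.eq_zero_or_pos (m k) with h0 | hpos
            · have hnn : (0:ℝ) ≤ Real.log 10 := Real.log_nonneg (by norm_num)
              have hz : h ((m k : ℝ)) = 0 := by
                simp only [hhdef, h0, Nat.cast_zero, Real.log_zero]
                exact max_eq_left (by linarith)
              rw [hz]; exact hH0
            · have hpos' : (0:ℝ) < (m k : ℝ) := by exact_mod_cast hpos
              have := Real.log_le_log hpos' hmk
              exact max_le_max le_rfl (by linarith)
          have hmB : 0 ≤ (m k : ℝ)/B := by positivity
          have h5 : C * h ((m k:ℝ)) + a ≤ C * H + a := by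
            have := mul_le_mul_of_nonneg_left hmono hC.le
            linarith
          exact mul_le_mul_of_nonneg_left h5 hmB
        have hsum1 : ∑ k ∈ s, Q (m k) ≤ ∑ k ∈ s, ((m k : ℝ)/B) * (C * H + a) :=
          Finset.sum_le_sum hsub
        have hsum2 : ∑ k ∈ s, ((m k : ℝ)/B) * (C * H + a)
            = (((∑ k ∈ s, m k : ℕ):ℝ)/B) * (C * H + a) := by
          rw [← Finset.sum_mul, ← Finset.sum_div]
          push_cast
          ring
        have hCHa : 0 ≤ C * H + a := by positivity
        have hsum3 : (((∑ k ∈ s, m k : ℕ):ℝ)/B) * (C * H + a)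
            ≤ (2 * (n:ℝ)/B) * (C * H + a) := by
          gcongr
        -- the key potential inequality
        have hlog3S : Real.log (3*S) = Real.log 3 + Real.log n / 2 := by
          rw [Real.log_mul (by norm_num) hS0.ne', hSdef, Real.log_sqrt hn0.le]
        have hδ' : δ = Real.log 10 - Real.log 9 := by
          rw [hδdef, Real.log_div (by norm_num) (by norm_num)]
        have hlog9 : Real.log 9 = 2 * Real.log 3 := by
          rw [show (9:ℝ) = 3^2 by norm_num, Real.log_pow]
          push_cast; ring
        have hlogn17 : Real.log 17 ≤ Real.log n := Real.log_le_log (by norm_num) h17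
        have hlog17 : Real.log (100/9) ≤ Real.log 17 := Real.log_le_log (by norm_num) (by norm_num)
        have hlog1009 : Real.log (100/9) = 2 * Real.log 10 - Real.log 9 := by
          rw [Real.log_div (by norm_num) (by norm_num),
            show (100:ℝ) = 10^2 by norm_num, Real.log_pow]
          push_cast; ring
        have hlog10n : Real.log 10 ≤ Real.log n := by
          have : Real.log 10 ≤ Real.log 17 := Real.log_le_log (by norm_num) (by norm_num)
          linarith
        have hhn : h (n:ℝ) = Real.log n - Real.log 10 := by
          rw [hhdef]; exact max_eq_right (by linarith)
        have key : 2 * H + δ ≤ h (n:ℝ) := by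
          rw [hhn]
          rcases le_or_gt (Real.log (3*S) - Real.log 10) 0 with hc | hc
          · rw [hHdef, max_eq_left hc]
            rw [hδ']
            linarith
          · rw [hHdef, max_eq_right hc.le, hlog3S, hδ']
            linarith
        have hkey2 : 2 * (C * H) + 2 * a ≤ C * h (n:ℝ) := by
          have h4 := mul_le_mul_of_nonneg_left key hC.le
          have h5 : C * (2 * H + δ) = 2 * (C * H) + 2 * a := by
            rw [mul_add, hCδ]; ring
          linarith
        have hnB : 0 ≤ (n:ℝ)/B := by positivity
        calc Q n ≤ a * n / B + ∑ k ∈ s, Q (m k) := hm3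
          _ ≤ a * n / B + (2 * (n:ℝ)/B) * (C * H + a) := by
              rw [hsum2] at hsum1; linarith
          _ ≤ ((n:ℝ)/B) * (C * h (n:ℝ) + a) := by
              have expand : a * n / B + (2 * (n:ℝ)/B) * (C * H + a)
                  = ((n:ℝ)/B) * (2 * (C * H) + 2*a + a) := by ring
              rw [expand]
              have h6 : 2 * (C * H) + 2*a + a ≤ C * h (n:ℝ) + a := by linarith
              exact mul_le_mul_of_nonneg_left h6 hnB
  -- conclude
  have hlog2 : 0 < Real.log 2 := Real.log_pos (by norm_num)
  refine ⟨(C + a / Real.log 2) * Real.log M, ?_⟩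
  intro n hn2
  have hn2' : (2:ℝ) ≤ n := by exact_mod_cast hn2
  have hlogn : Real.log 2 ≤ Real.log n := Real.log_le_log (by norm_num) hn2'
  have hlogn0 : 0 < Real.log n := by linarith
  have hhle : h (n:ℝ) ≤ Real.log n := by
    rw [hhdef]
    have : 0 ≤ Real.log 10 := Real.log_nonneg (by norm_num)
    exact max_le hlogn0.le (by linarith)
  have hnB : 0 ≤ (n:ℝ)/B := by positivity
  refine (main n).trans ?_
  have heq : (C + a / Real.log 2) * Real.log M * ((n:ℝ)/B) * (Real.log n / Real.log M)
      = ((n:ℝ)/B) * ((C + a / Real.log 2) * Real.log n) := by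
    field_simp
  rw [heq]
  have h1 : C * h (n:ℝ) + a ≤ (C + a / Real.log 2) * Real.log n := by
    have h2 : C * h (n:ℝ) ≤ C * Real.log n := mul_le_mul_of_nonneg_left hhle hC.le
    have h3 : a ≤ (a / Real.log 2) * Real.log n := by
      rw [div_mul_eq_mul_div, le_div_iff₀ hlog2]
      nlinarith
    linarith
  exact mul_le_mul_of_nonneg_left h1 hnB
end

section
/- In a binary fork-join computation dag executed under a work-stealing scheduler, for any task τ (the original task or a stolen subtask) that incurs steals of subtasks τ₁, ..., τ_k, there exists a root-to-final-node path P_τ in τ's computation dag such that the parent (fork node) of every stolen subtask τ_i lies on P_τ, and every right child of a fork node on P_τ that is off the path is the start node of a stolen subtask. -/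
/-!
Build the path greedily from the root: at each fork go left exactly when the right child was
stolen, so every off-path right child is stolen by construction. Along the root path of a stolen
node, non-nesting rules out a stolen right child where that path goes right, and deque order
forces one where it goes left; so the greedy path follows it, and once it is longer than every
stolen node it passes through all their parents.
-/

section StealPath

variable (S : Set (List Bool))

open Classical in
noncomputable def stealPath : ℕ → List Bool
  | 0 => []
  | n + 1 => stealPath n ++ [decide (stealPath n ++ [true] ∉ S)]

@[simp]
theorem stealPath_length (n : ℕ) : (stealPath S n).length = n := by
  induction n with
  | zero => rfl
  | succ n ih => simp [stealPath, ih]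

theorem stealPath_prefix_of_le {n m : ℕ} (h : n ≤ m) : stealPath S n <+: stealPath S m := by
  induction m, h using Nat.le_induction with
  | base => exact List.prefix_rfl
  | succ m _ ih => exact ih.trans (List.prefix_append _ _)

theorem eq_stealPath_length_of_prefix {v : List Bool} {n : ℕ} (h : v <+: stealPath S n) :
    v = stealPath S v.length := by
  have hle : v.length ≤ n := by simpa using h.length_le
  have hpre := stealPath_prefix_of_le S hle
  rw [List.prefix_iff_eq_take, stealPath_length] at hpre
  exact (List.prefix_iff_eq_take.mp h).trans hpre.symm

theorem append_true_mem_of_append_false_prefix {u : List Bool} {n : ℕ}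
    (h : u ++ [false] <+: stealPath S n) : u ++ [true] ∈ S := by
  have h := eq_stealPath_length_of_prefix S h
  rw [List.length_append, List.length_singleton, stealPath] at h
  obtain ⟨hu, hbit⟩ := List.append_inj' h rfl
  rw [← hu] at hbit
  simpa using hbit

variable {S}

theorem stealPath_eq_of_append_true_mem
    (hdeque : ∀ u w : List Bool, w ++ [true] ∈ S → u ++ [false] <+: w → u ++ [true] ∈ S)
    (hnonest : ∀ v ∈ S, ∀ w ∈ S, v <+: w → v = w) {w : List Bool} (hw : w ++ [true] ∈ S) :
    stealPath S w.length = w := by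
  suffices ∀ k ≤ w.length, stealPath S k = w.take k by simpa using this _ le_rfl
  intro k
  induction k with
  | zero => simp [stealPath]
  | succ k ih =>
    intro hk
    have hnext : w.take k ++ [w[k]] <+: w := by
      rw [List.take_concat_get']
      exact List.take_prefix _ _
    rw [stealPath, ih (by omega), ← List.take_concat_get' w k hk]
    congr 2
    cases hbit : w[k] <;> rw [hbit] at hnext
    · simpa using hdeque _ w hw hnext
    · simp only [decide_eq_true_eq]
      intro hmem
      have heq := hnonest _ hmem _ hw (hnext.trans (List.prefix_append _ _))
      have := congrArg List.length heq
      simp at this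
      omega

end StealPath

/-- Steal Path Fact: Nodes of the binary fork-join computation dag of a
task `τ` are modeled as positions in a binary tree, i.e. lists of booleans
(`false` = left child, `true` = right child); `u <+: v` means `u` is an ancestor of
(or equal to) `v`. `stolen` is the set of start nodes of the stolen subtasks of `τ`.
Work-stealing guarantees: (a) every stolen subtask starts at the right child of a
fork node; (b) deque (oldest-first) order: if the right child of `w` is stolen and
`w` lies in the left subtree of `u`, then the right child of `u` is also stolen;
(c) stolen subtasks of `τ` are not nested. Then there is a root-to-final-node path
`P` such that the parent of every stolen subtask lies on `P`, and every off-path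
right child of a fork node on `P` is the start node of a stolen subtask. -/
theorem steal_path_fact (stolen : Set (List Bool)) (hfin : stolen.Finite)
    (hright : ∀ v ∈ stolen, ∃ u : List Bool, v = u ++ [true])
    (hdeque : ∀ u w : List Bool,
      w ++ [true] ∈ stolen → (u ++ [false]) <+: w → u ++ [true] ∈ stolen)
    (hnonest : ∀ v ∈ stolen, ∀ w ∈ stolen, v <+: w → v = w) :
    ∃ P : List Bool,
      (∀ v ∈ stolen, ∃ u : List Bool, v = u ++ [true] ∧ u <+: P) ∧
      (∀ u : List Bool, (u ++ [false]) <+: P → u ++ [true] ∈ stolen) := by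
  obtain ⟨N, hN⟩ := (hfin.image List.length).bddAbove
  refine ⟨stealPath stolen N, fun v hv => ?_, fun u hu => ?_⟩
  · obtain ⟨w, rfl⟩ := hright v hv
    have hlen : (w ++ [true]).length ≤ N := hN ⟨_, hv, rfl⟩
    refine ⟨w, rfl, ?_⟩
    rw [← stealPath_eq_of_append_true_mem hdeque hnonest hv]
    exact stealPath_prefix_of_le stolen (by simp at hlen; omega)
  · exact append_true_mem_of_append_false_prefix stolen hu
end

section
/- If a cache-oblivious algorithm is regular — its cache-miss bound Q(n; M, B) satisfies Q(n; M, B) = O(Q(n; 4M, B)) under the tall-cache assumption M ≥ B² — then block misalignment in a parallel execution, which at worst quadruples the number of blocks accessed per sequential block, increases the cache-miss bound by only a constant factor. -/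
/-- If the algorithm is regular — its sequential cache-miss bound
satisfies `Qseq(M) ≤ C·Qseq(4M)` for tall caches `M ≥ B²` — and a parallel execution
with cache `4M` incurs at most `4` times the misses of the sequential execution with
cache `M` (block misalignment at worst quadruples block accesses), then the parallel
execution with cache `M` incurs at most `4C·Qseq(M)` misses: misalignment costs only
a constant factor. -/
theorem regular_misalignment (Qseq Qpar : ℝ → ℝ) (C B : ℝ) (hC : 0 ≤ C)
    (hreg : ∀ M : ℝ, B ^ 2 ≤ M → Qseq M ≤ C * Qseq (4 * M))
    (hpar : ∀ M : ℝ, B ^ 2 ≤ M → Qpar (4 * M) ≤ 4 * Qseq M) :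
    ∀ M : ℝ, 4 * B ^ 2 ≤ M → Qpar M ≤ 4 * C * Qseq M := by
  intro M hM
  have h4 : B ^ 2 ≤ M / 4 := by linarith
  have h1 := hpar (M / 4) h4
  have h2 := hreg (M / 4) h4
  have hMeq : 4 * (M / 4) = M := by ring
  rw [hMeq] at h1 h2
  nlinarith
end
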